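/- Let Φ be a Young function, φ ∈ 𝒢^dec (almost decreasing with φ(r)r^n almost increasing), and K : ℝⁿ×ℝⁿ∖{x=y} → ℂ satisfy |K(x,y)| ≤ C|x−y|^{−n}. Then there exists C' > 0 such that for all f ∈ L^{(Φ,φ)}(ℝⁿ), all balls B = B(z,r), and all x ∈ B: ∫_{ℝⁿ∖2B} |K(x,y) f(y)| dy ≤ C' (∫_{2r}^∞ Φ⁻¹(φ(t))/t dt) ‖f‖_{L^{(Φ,φ)}}. -/

import Mathlib

/-!
For `x ∈ B(z,r)` and `y ∉ B(z,2r)` we have `|x - y| ≥ |y - z| / 2`, so the kernel is bounded by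
`2ⁿ C |y - z|⁻ⁿ`. Writing `|y - z|⁻ⁿ = n ∫_{|y-z|}^∞ t⁻ⁿ⁻¹ dt` and exchanging the integrals
(Tonelli) bounds the tail integral by `n ∫_{2r}^∞ t⁻ⁿ⁻¹ ∫_{B(z,t)} |f| dt`. The pointwise Young
inequality `s ≤ Φ⁻¹(u) (1 + Φ(s)/u)`, applied to `s = |f|/λ`, `u = φ(t)` and averaged over
`B(z,t)`, gives `∫_{B(z,t)} |f| ≤ 2 Φ⁻¹(φ(t)) |B(z,t)| ‖f‖`, and `t⁻ⁿ⁻¹ |B(z,t)| = |B(0,1)| / t`.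
-/

open MeasureTheory Set Metric Filter NNReal ENNReal Topology

noncomputable section

/-- Generalized inverse in the sense of O'Neil. -/
def ginv (Φ : ℝ≥0∞ → ℝ≥0∞) (u : ℝ≥0∞) : ℝ≥0∞ :=
  if u = ⊤ then ⊤ else sInf {t | u < Φ t}

/-- A Young function: increasing, convex, vanishing at 0, left continuous,
not identically zero nor identically infinite. -/
structure IsYoung (Φ : ℝ≥0∞ → ℝ≥0∞) : Prop where
  mono : Monotone Φ
  zero : Φ 0 = 0
  top : Φ ⊤ = ⊤
  conv : ∀ (x y : ℝ≥0∞) (a b : ℝ≥0), a + b = 1 →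
    Φ ((a : ℝ≥0∞) * x + (b : ℝ≥0∞) * y) ≤ (a : ℝ≥0∞) * Φ x + (b : ℝ≥0∞) * Φ y
  lcont : ∀ t : ℝ≥0∞, t < sInf {s | Φ s = ⊤} →
    Filter.Tendsto Φ (nhdsWithin t (Set.Iio t)) (nhds (Φ t))
  pos : ∃ t, 0 < t ∧ Φ t ≠ ⊤
  fin : ∃ t, t ≠ ⊤ ∧ Φ t ≠ 0

/-- `θ` is almost decreasing on `(0,∞)`. -/
def AlmostDecreasingOn (θ : ℝ → ℝ) : Prop :=
  ∃ C : ℝ, 0 < C ∧ ∀ r s : ℝ, 0 < r → r < s → θ s ≤ C * θ r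

/-- `θ` is almost increasing on `(0,∞)`. -/
def AlmostIncreasingOn (θ : ℝ → ℝ) : Prop :=
  ∃ C : ℝ, 0 < C ∧ ∀ r s : ℝ, 0 < r → r < s → θ r ≤ C * θ s

/-- The class `𝒢^dec`: positive, almost decreasing `φ` with `r ↦ φ(r) rⁿ` almost increasing. -/
def Gdec (n : ℕ) (φ : ℝ → ℝ) : Prop :=
  (∀ r : ℝ, 0 < r → 0 < φ r) ∧ AlmostDecreasingOn φ ∧
    AlmostIncreasingOn (fun r => φ r * r ^ n)

variable {n : ℕ}

/-- The Orlicz–Morrey "norm" of `f` on the ball `B(a,r)`. -/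
def ballNorm (Φ : ℝ≥0∞ → ℝ≥0∞) (φ : ℝ → ℝ)
    (f : EuclideanSpace ℝ (Fin n) → ℝ) (a : EuclideanSpace ℝ (Fin n)) (r : ℝ) : ℝ≥0∞ :=
  sInf {lam : ℝ≥0∞ | 0 < lam ∧
    (ENNReal.ofReal (φ r))⁻¹ * ((volume (ball a r))⁻¹ *
      ∫⁻ x in ball a r, Φ (ENNReal.ofReal |f x| / lam)) ≤ 1}

/-- The Orlicz–Morrey norm `‖f‖_{L^{(Φ,φ)}}`: supremum over all balls of `ballNorm`. -/
def omNorm (Φ : ℝ≥0∞ → ℝ≥0∞) (φ : ℝ → ℝ) (f : EuclideanSpace ℝ (Fin n) → ℝ) : ℝ≥0∞ :=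
  ⨆ (a : EuclideanSpace ℝ (Fin n)) (r : ℝ) (_ : 0 < r), ballNorm Φ φ f a r

/-- The Orlicz–Campanato norm `‖f‖_{𝓛^{(Φ,φ)}} = sup_B ‖f − f_B‖_{Φ,φ,B}`. -/
def campNorm (Φ : ℝ≥0∞ → ℝ≥0∞) (φ : ℝ → ℝ) (f : EuclideanSpace ℝ (Fin n) → ℝ) : ℝ≥0∞ :=
  ⨆ (a : EuclideanSpace ℝ (Fin n)) (r : ℝ) (_ : 0 < r),
    ballNorm Φ φ (fun x => f x - ⨍ y in ball a r, f y) a r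

open Module

lemma ginv_mono (Φ : ℝ≥0∞ → ℝ≥0∞) : Monotone (ginv Φ) := by
  intro u v huv
  rcases eq_or_ne v ⊤ with rfl | hv
  · simp [ginv]
  rw [ginv, if_neg (ne_top_of_le_ne_top hv huv), ginv, if_neg hv]
  exact sInf_le_sInf fun t (ht : v < Φ t) => huv.trans_lt ht

lemma ballNorm_le_omNorm (Φ : ℝ≥0∞ → ℝ≥0∞) (φ : ℝ → ℝ) (f : EuclideanSpace ℝ (Fin n) → ℝ)
    (z : EuclideanSpace ℝ (Fin n)) {t : ℝ} (ht : 0 < t) : ballNorm Φ φ f z t ≤ omNorm Φ φ f :=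
  le_iSup₂_of_le z t (le_iSup_of_le ht le_rfl)

variable {Φ : ℝ≥0∞ → ℝ≥0∞}

namespace IsYoung

lemma apply_mul_le (hY : IsYoung Φ) {a : ℝ≥0} (ha : a ≤ 1) (s : ℝ≥0∞) :
    Φ (a * s) ≤ a * Φ s := by
  simpa [hY.zero] using hY.conv s 0 a (1 - a) (add_tsub_cancel_of_le ha)

lemma mul_apply_le_mul_apply (hY : IsYoung Φ) {t s : ℝ≥0∞} (ht : t ≠ 0) (hts : t ≤ s) :
    s * Φ t ≤ t * Φ s := by
  rcases eq_or_ne s ⊤ with rfl | hs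
  · simp [hY.top, ht]
  have hs0 : s ≠ 0 := (pos_of_ne_zero ht |>.trans_le hts).ne'
  have hcoe : ((t.toNNReal / s.toNNReal : ℝ≥0) : ℝ≥0∞) = t / s := by
    rw [ENNReal.coe_div (ENNReal.toNNReal_ne_zero.2 ⟨hs0, hs⟩),
      ENNReal.coe_toNNReal (ne_top_of_le_ne_top hs hts), ENNReal.coe_toNNReal hs]
  have hle : t.toNNReal / s.toNNReal ≤ 1 :=
    div_le_one_of_le₀ (ENNReal.toNNReal_mono hs hts) zero_le
  have hΦt : Φ t ≤ t / s * Φ s := by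
    simpa only [hcoe, ENNReal.div_mul_cancel hs0 hs] using hY.apply_mul_le hle s
  calc s * Φ t ≤ s * (t / s) * Φ s := by rw [mul_assoc]; gcongr
    _ = t * Φ s := by rw [ENNReal.mul_div_cancel hs0 hs]

lemma ginv_pos (hY : IsYoung Φ) {u : ℝ≥0∞} (hu : u ≠ 0) : 0 < ginv Φ u := by
  rcases eq_or_ne u ⊤ with rfl | hut
  · simp [ginv]
  obtain ⟨t₀, ht₀, ht₀_top⟩ := hY.pos
  obtain ⟨a, ha, hau⟩ := ENNReal.exists_nnreal_pos_mul_lt ht₀_top hu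
  rw [ginv, if_neg hut, pos_iff_ne_zero]
  intro h
  have hbt : sInf {t | u < Φ t} < min a 1 * t₀ := h ▸ ENNReal.mul_pos
    (by simpa using ha.ne') ht₀.ne'
  obtain ⟨t, hut, htb⟩ := sInf_lt_iff.1 hbt
  have : Φ t < u := calc
    Φ t ≤ Φ (min a 1 * t₀) := hY.mono htb.le
    _ ≤ min a 1 * Φ t₀ := by exact_mod_cast hY.apply_mul_le (min_le_right a 1) t₀
    _ ≤ a * Φ t₀ := by gcongr; exact_mod_cast min_le_left a 1
    _ < u := hau
  exact (hut.trans this).false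

lemma ginv_lt_top (hY : IsYoung Φ) {u : ℝ≥0∞} (hu : u ≠ ⊤) : ginv Φ u < ⊤ := by
  obtain ⟨t, ht_top, ht0⟩ := hY.fin
  obtain ⟨k, hk⟩ := ENNReal.exists_nat_mul_gt ht0 hu
  have hk1 : (1 : ℝ≥0∞) ≤ k := by
    rcases Nat.eq_zero_or_pos k with rfl | hk0
    · simp at hk
    · exact_mod_cast hk0
  have ht : t ≠ 0 := fun h => ht0 (h ▸ hY.zero)
  have hgrowth : k * Φ t ≤ Φ (k * t) := by
    have := hY.mul_apply_le_mul_apply ht (le_mul_of_one_le_left zero_le hk1)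
    rwa [mul_assoc, mul_comm (k : ℝ≥0∞), mul_assoc, ENNReal.mul_le_mul_iff_right ht ht_top,
      mul_comm] at this
  rw [ginv, if_neg hu]
  exact (sInf_le (show (k * t : ℝ≥0∞) ∈ {t | u < Φ t} from hk.trans_le hgrowth)).trans_lt
    (ENNReal.mul_lt_top (natCast_lt_top k) ht_top.lt_top)

lemma le_ginv_mul (hY : IsYoung Φ) {u : ℝ≥0∞} (hu0 : u ≠ 0) (hut : u ≠ ⊤) (s : ℝ≥0∞) :
    s ≤ ginv Φ u * (1 + Φ s / u) := by
  rcases le_or_gt s (ginv Φ u) with hs | hs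
  · exact hs.trans (le_mul_of_one_le_right zero_le le_self_add)
  have hginv : ginv Φ u = sInf {t | u < Φ t} := by rw [ginv, if_neg hut]
  obtain ⟨t₀, ht₀, ht₀s⟩ := sInf_lt_iff.1 (hginv ▸ hs)
  have hus : u < Φ s := ht₀.trans_le (hY.mono ht₀s.le)
  rcases eq_or_ne (Φ s) ⊤ with htop | htop
  · simp [htop, ENNReal.top_div_of_ne_top hut, (hY.ginv_pos hu0).ne']
  have hΦs0 : Φ s ≠ 0 := (pos_of_gt hus).ne'
  -- every `t` with `u < Φ t` satisfies `s * u ≤ t * Φ s`: by superlinearity if `t < s`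
  have hbound : s * u / Φ s ≤ ginv Φ u := by
    rw [hginv]
    refine le_sInf fun t (ht : u < Φ t) => ?_
    rw [ENNReal.div_le_iff_le_mul (.inl hΦs0) (.inl htop)]
    rcases le_or_gt s t with hst | hst
    · exact mul_le_mul' hst hus.le
    · have ht0 : t ≠ 0 := by rintro rfl; simp [hY.zero] at ht
      exact (mul_le_mul_right ht.le s).trans (hY.mul_apply_le_mul_apply ht0 hst.le)
  calc s = s * (u * u⁻¹) * (Φ s * (Φ s)⁻¹) := by
        rw [ENNReal.mul_inv_cancel hu0 hut, ENNReal.mul_inv_cancel hΦs0 htop, mul_one, mul_one]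
    _ = s * u / Φ s * (Φ s / u) := by simp only [div_eq_mul_inv]; ring
    _ ≤ ginv Φ u * (1 + Φ s / u) := by gcongr; exact le_add_self

lemma lintegral_le_of_lintegral_apply_div_le {α : Type*} [MeasurableSpace α] {μ : Measure α}
    (hY : IsYoung Φ) {F : α → ℝ≥0∞} {u lam : ℝ≥0∞} (hu0 : u ≠ 0) (hut : u ≠ ⊤) (hlam0 : lam ≠ 0)
    (hlamt : lam ≠ ⊤) (h : ∫⁻ x, Φ (F x / lam) ∂μ ≤ u * μ univ) :
    ∫⁻ x, F x ∂μ ≤ 2 * ginv Φ u * μ univ * lam := by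
  have hg : ginv Φ u ≠ ⊤ := (hY.ginv_lt_top hut).ne
  calc ∫⁻ x, F x ∂μ ≤ ∫⁻ x, lam * ginv Φ u * (1 + u⁻¹ * Φ (F x / lam)) ∂μ := by
        refine lintegral_mono fun x => ?_
        calc F x = lam * (F x / lam) := (ENNReal.mul_div_cancel hlam0 hlamt).symm
          _ ≤ lam * (ginv Φ u * (1 + Φ (F x / lam) / u)) := by
            gcongr; exact hY.le_ginv_mul hu0 hut _
          _ = _ := by rw [div_eq_mul_inv, mul_comm _ u⁻¹, mul_assoc]
    _ = lam * ginv Φ u * (μ univ + u⁻¹ * ∫⁻ x, Φ (F x / lam) ∂μ) := by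
        rw [lintegral_const_mul' _ _ (mul_ne_top hlamt hg), lintegral_add_left measurable_const,
          lintegral_const, one_mul, lintegral_const_mul' _ _ (inv_ne_top.2 hu0)]
    _ ≤ lam * ginv Φ u * (μ univ + u⁻¹ * (u * μ univ)) := by gcongr
    _ = 2 * ginv Φ u * μ univ * lam := by
        rw [← mul_assoc, ENNReal.inv_mul_cancel hu0 hut, one_mul]; ring


lemma lintegral_ball_le_ballNorm (hY : IsYoung Φ) {φ : ℝ → ℝ} {t : ℝ} (ht : 0 < t)
    (hφt : 0 < φ t) (f : EuclideanSpace ℝ (Fin n) → ℝ) (z : EuclideanSpace ℝ (Fin n)) :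
    ∫⁻ y in ball z t, ENNReal.ofReal |f y| ≤
      2 * ginv Φ (ENNReal.ofReal (φ t)) * volume (ball z t) * ballNorm Φ φ f z t := by
  set u := ENNReal.ofReal (φ t)
  set c := 2 * ginv Φ u * volume (ball z t)
  have hu0 : u ≠ 0 := (ENNReal.ofReal_pos.2 hφt).ne'
  have hv0 : volume (ball z t) ≠ 0 := (measure_ball_pos volume z ht).ne'
  have hvt : volume (ball z t) ≠ ⊤ := measure_ball_lt_top.ne
  have hc0 : c ≠ 0 := by simp [c, (hY.ginv_pos hu0).ne', hv0]
  have hct : c ≠ ⊤ :=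
    mul_ne_top (mul_ne_top ofNat_ne_top (hY.ginv_lt_top ofReal_ne_top).ne) hvt
  refine ((ENNReal.div_le_iff_le_mul (.inl hc0) (.inl hct)).1 ?_).trans_eq (mul_comm _ _)
  refine le_sInf fun lam ⟨hlam0, hlam⟩ => ?_
  rw [ENNReal.div_le_iff_le_mul (.inl hc0) (.inl hct), mul_comm]
  rcases eq_or_ne lam ⊤ with rfl | hlamt
  · simp [hc0]
  rw [ENNReal.inv_mul_le_iff hu0 ofReal_ne_top, mul_one, ENNReal.inv_mul_le_iff hv0 hvt,
    mul_comm, ← Measure.restrict_apply_univ] at hlam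
  simpa only [Measure.restrict_apply_univ] using
    hY.lintegral_le_of_lintegral_apply_div_le hu0 ofReal_ne_top hlam0.ne' hlamt hlam

lemma lintegral_ball_le_omNorm (hY : IsYoung Φ) {φ : ℝ → ℝ} {t : ℝ} (ht : 0 < t)
    (hφt : 0 < φ t) (f : EuclideanSpace ℝ (Fin n) → ℝ) (z : EuclideanSpace ℝ (Fin n)) :
    ∫⁻ y in ball z t, ENNReal.ofReal |f y| ≤
      2 * ginv Φ (ENNReal.ofReal (φ t)) * omNorm Φ φ f * volume (ball z t) := by
  rw [mul_right_comm]
  exact (hY.lintegral_ball_le_ballNorm ht hφt f z).trans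
    (mul_le_mul_right (ballNorm_le_omNorm Φ φ f z ht) _)

lemma lintegral_Ioi_ginv_div_pos (hY : IsYoung Φ) {φ : ℝ → ℝ}
    (hφ_pos : ∀ r, 0 < r → 0 < φ r) (hφ_dec : AlmostDecreasingOn φ) {R : ℝ} (hR : 0 < R) :
    0 < ∫⁻ t in Ioi R, ginv Φ (ENNReal.ofReal (φ t)) / ENNReal.ofReal t := by
  obtain ⟨C, hC, hφC⟩ := hφ_dec
  set c := ginv Φ (ENNReal.ofReal (φ (2 * R) / C)) / ENNReal.ofReal (2 * R)
  have hc : c ≠ 0 := (ENNReal.div_pos (hY.ginv_pos (ENNReal.ofReal_pos.2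
    (div_pos (hφ_pos _ (by linarith)) hC)).ne').ne' ofReal_ne_top).ne'
  have hlow : ∀ t ∈ Ioo R (2 * R), c ≤ ginv Φ (ENNReal.ofReal (φ t)) / ENNReal.ofReal t := by
    rintro t ⟨hRt, ht2R⟩
    refine ENNReal.div_le_div (ginv_mono Φ (ENNReal.ofReal_le_ofReal ?_))
      (ENNReal.ofReal_le_ofReal ht2R.le)
    rw [div_le_iff₀ hC]
    linarith [hφC t (2 * R) (hR.trans hRt) ht2R]
  calc (0 : ℝ≥0∞) < c * ENNReal.ofReal R := ENNReal.mul_pos hc (ENNReal.ofReal_pos.2 hR).ne'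
    _ = ∫⁻ _ in Ioo R (2 * R), c := by rw [setLIntegral_const, Real.volume_Ioo]; ring_nf
    _ ≤ ∫⁻ t in Ioo R (2 * R), ginv Φ (ENNReal.ofReal (φ t)) / ENNReal.ofReal t :=
        setLIntegral_mono' measurableSet_Ioo hlow
    _ ≤ _ := lintegral_mono_set Ioo_subset_Ioi_self

end IsYoung

lemma norm_le_of_mem_ball_of_notMem_ball {E β : Type*} [SeminormedAddCommGroup E] [Norm β]
    {K : E → E → β} {C : ℝ} (hC : 0 ≤ C) {d : ℕ}
    (hK : ∀ x y, x ≠ y → ‖K x y‖ ≤ C / ‖x - y‖ ^ d) {x y z : E} {r : ℝ}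
    (hx : x ∈ ball z r) (hy : y ∉ ball z (2 * r)) :
    ‖K x y‖ ≤ 2 ^ d * C / dist y z ^ d := by
  rw [mem_ball] at hx
  rw [mem_ball, not_lt] at hy
  have hxy : dist y z / 2 < ‖x - y‖ := by
    rw [← dist_eq_norm]
    linarith [dist_triangle y x z, dist_comm x y]
  have hd : 0 < dist y z / 2 := by linarith [dist_nonneg (x := x) (y := z)]
  calc ‖K x y‖ ≤ C / ‖x - y‖ ^ d := hK x y (by rintro rfl; rw [sub_self, norm_zero] at hxy; linarith)
    _ ≤ C / (dist y z / 2) ^ d := by gcongr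
    _ = 2 ^ d * C / dist y z ^ d := by rw [div_pow, div_div_eq_mul_div, mul_comm]

lemma ofReal_inv_pow_eq_mul_lintegral_Ioi {d : ℕ} (hd : d ≠ 0) {s : ℝ} (hs : 0 < s) :
    ENNReal.ofReal (s ^ d)⁻¹ = d * ∫⁻ t in Ioi s, ENNReal.ofReal (t ^ (-(d : ℝ) - 1)) := by
  have hexp : -(d : ℝ) - 1 < -1 := by
    linarith [(Nat.cast_pos.2 (Nat.pos_of_ne_zero hd) : (0 : ℝ) < d)]
  rw [← ofReal_integral_eq_lintegral_ofReal (integrableOn_Ioi_rpow_of_lt hexp hs)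
      (ae_restrict_of_forall_mem measurableSet_Ioi fun t ht => Real.rpow_nonneg (hs.trans ht).le _),
    integral_Ioi_rpow_of_lt hexp hs, ← ENNReal.ofReal_natCast, ← ENNReal.ofReal_mul (by positivity)]
  congr 1
  rw [show -(d : ℝ) - 1 + 1 = -d by ring, neg_div_neg_eq, mul_div_cancel₀ _ (by positivity),
    Real.rpow_neg hs.le, Real.rpow_natCast]

lemma exists_measurable_le_setLIntegral_mul_eq {α : Type*} [MeasurableSpace α] {μ : Measure α}
    {s : Set α} (hs : MeasurableSet s) {w : α → ℝ≥0∞} (hw : Measurable w)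
    (hw0 : ∀ x ∈ s, w x ≠ 0) (hwt : ∀ x ∈ s, w x ≠ ⊤) (F : α → ℝ≥0∞) :
    ∃ G, Measurable G ∧ G ≤ F ∧ ∫⁻ x in s, w x * F x ∂μ = ∫⁻ x in s, w x * G x ∂μ := by
  obtain ⟨H, hH, hHle, hHeq⟩ := exists_measurable_le_lintegral_eq (μ.restrict s) (w * F)
  refine ⟨s.indicator (H / w), (hH.div hw).indicator hs, fun x => ?_, ?_⟩
  · by_cases hx : x ∈ s
    · rw [indicator_of_mem hx, Pi.div_apply, ENNReal.div_le_iff (hw0 x hx) (hwt x hx), mul_comm]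
      exact hHle x
    · simp [hx]
  · refine hHeq.trans (setLIntegral_congr_fun hs fun x hx => ?_)
    rw [indicator_of_mem hx, Pi.div_apply, ENNReal.mul_div_cancel (hw0 x hx) (hwt x hx)]

section

variable {E : Type*} [NormedAddCommGroup E] [NormedSpace ℝ E] [MeasurableSpace E] [BorelSpace E]
  [FiniteDimensional ℝ E] (μ : Measure E) [μ.IsAddHaarMeasure]

lemma lintegral_compl_ball_le_of_measurable {F : E → ℝ≥0∞} (hF_meas : Measurable F)
    {A : ℝ → ℝ≥0∞} {z : E} {R : ℝ} (hR : 0 < R)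
    (hF : ∀ t, R < t → ∫⁻ y in ball z t, F y ∂μ ≤ A t * μ (ball z t)) :
    ∫⁻ y in (ball z R)ᶜ, ENNReal.ofReal (dist y z ^ finrank ℝ E)⁻¹ * F y ∂μ ≤
      finrank ℝ E * μ (ball 0 1) * ∫⁻ t in Ioi R, A t / ENNReal.ofReal t := by
  set d := finrank ℝ E
  rcases eq_or_ne d 0 with hd | hd
  · have : Subsingleton E := finrank_zero_iff.1 hd
    have hempty : (ball z R)ᶜ = ∅ := by ext y; simp [Subsingleton.elim y z, hR]
    simp [hempty]
  set k : ℝ → ℝ≥0∞ := fun t => ENNReal.ofReal (t ^ (-(d : ℝ) - 1))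
  have hk : Measurable k := by fun_prop
  set G : E → ℝ → ℝ≥0∞ := fun y t =>
    {p : E × ℝ | dist p.1 z < p.2}.indicator (fun p => F p.1 * k p.2) (y, t)
  have hG : Measurable (Function.uncurry G) :=
    ((hF_meas.comp measurable_fst).mul (hk.comp measurable_snd)).indicator
      (measurableSet_lt (by fun_prop) measurable_snd)
  have hG_Ioi (y : E) : G y = (Ioi (dist y z)).indicator (fun t => F y * k t) := by
    ext t; by_cases h : dist y z < t <;> simp [G, h]
  have hG_ball (t : ℝ) : (G · t) = (ball z t).indicator (fun y => F y * k t) := by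
    ext y; by_cases h : dist y z < t <;> simp [G, h]
  have hlayer : ∀ y ∈ (ball z R)ᶜ,
      ENNReal.ofReal (dist y z ^ d)⁻¹ * F y = d * ∫⁻ t in Ioi R, G y t := by
    intro y hy
    have hRy : R ≤ dist y z := by simpa using hy
    rw [ofReal_inv_pow_eq_mul_lintegral_Ioi hd (hR.trans_le hRy), hG_Ioi,
      lintegral_indicator measurableSet_Ioi, Measure.restrict_restrict measurableSet_Ioi,
      Ioi_inter_Ioi, max_eq_left hRy, lintegral_const_mul _ hk]
    ring
  have hinner : ∀ t ∈ Ioi R, ∫⁻ y in (ball z R)ᶜ, G y t ∂μ ≤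
      μ (ball 0 1) * (A t / ENNReal.ofReal t) := by
    intro t (ht : R < t)
    have htpos : 0 < t := hR.trans ht
    have hvol : μ (ball z t) * k t = μ (ball 0 1) * (ENNReal.ofReal t)⁻¹ := by
      rw [Measure.addHaar_ball_of_pos μ z htpos, mul_right_comm,
        ← ENNReal.ofReal_mul (by positivity), ← ENNReal.ofReal_inv_of_pos htpos,
        ← Real.rpow_natCast, ← Real.rpow_add htpos, show (d : ℝ) + (-(d : ℝ) - 1) = -1 by ring,
        Real.rpow_neg_one, mul_comm]
    calc ∫⁻ y in (ball z R)ᶜ, G y t ∂μ ≤ ∫⁻ y, G y t ∂μ := setLIntegral_le_lintegral _ _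
      _ = (∫⁻ y in ball z t, F y ∂μ) * k t := by
        rw [hG_ball, lintegral_indicator measurableSet_ball, lintegral_mul_const _ hF_meas]
      _ ≤ A t * μ (ball z t) * k t := by gcongr; exact hF t ht
      _ = μ (ball 0 1) * (A t / ENNReal.ofReal t) := by
        rw [mul_assoc, hvol, div_eq_mul_inv]; ring
  calc ∫⁻ y in (ball z R)ᶜ, ENNReal.ofReal (dist y z ^ d)⁻¹ * F y ∂μ
      = ∫⁻ y in (ball z R)ᶜ, (d * ∫⁻ t in Ioi R, G y t) ∂μ :=
        setLIntegral_congr_fun measurableSet_ball.compl hlayer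
    _ = d * ∫⁻ t in Ioi R, ∫⁻ y in (ball z R)ᶜ, G y t ∂μ := by
        rw [lintegral_const_mul' _ _ (natCast_ne_top d), lintegral_lintegral_swap hG.aemeasurable]
    _ ≤ d * ∫⁻ t in Ioi R, μ (ball 0 1) * (A t / ENNReal.ofReal t) :=
        mul_le_mul_right (setLIntegral_mono' measurableSet_Ioi hinner) _
    _ = d * μ (ball 0 1) * ∫⁻ t in Ioi R, A t / ENNReal.ofReal t := by
        rw [lintegral_const_mul' _ _ measure_ball_lt_top.ne, mul_assoc]

lemma lintegral_compl_ball_le {F : E → ℝ≥0∞} {A : ℝ → ℝ≥0∞} {z : E} {R : ℝ} (hR : 0 < R)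
    (hF : ∀ t, R < t → ∫⁻ y in ball z t, F y ∂μ ≤ A t * μ (ball z t)) :
    ∫⁻ y in (ball z R)ᶜ, ENNReal.ofReal (dist y z ^ finrank ℝ E)⁻¹ * F y ∂μ ≤
      finrank ℝ E * μ (ball 0 1) * ∫⁻ t in Ioi R, A t / ENNReal.ofReal t := by
  -- `F` need not be measurable: pass to a measurable minorant with the same weighted integral
  have hw0 : ∀ y ∈ (ball z R)ᶜ, ENNReal.ofReal (dist y z ^ finrank ℝ E)⁻¹ ≠ 0 := fun y hy =>
    (ENNReal.ofReal_pos.2 (inv_pos.2 (pow_pos (hR.trans_le (by simpa using hy)) _))).ne'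
  obtain ⟨G, hG, hGF, hGeq⟩ := exists_measurable_le_setLIntegral_mul_eq (μ := μ)
    measurableSet_ball.compl (by fun_prop) hw0 (fun _ _ => ofReal_ne_top) F
  rw [hGeq]
  exact lintegral_compl_ball_le_of_measurable μ hG hR fun t ht =>
    (lintegral_mono fun y => hGF y).trans (hF t ht)

end

/-- tail estimate for a kernel of size `|K(x,y)| ≤ C|x−y|^{-n}`:
for `x ∈ B(z,r)`,
`∫_{ℝⁿ∖2B} |K(x,y) f(y)| dy ≤ C' (∫_{2r}^∞ Φ⁻¹(φ(t))/t dt) ‖f‖_{L^{(Φ,φ)}}`. -/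
theorem stmt18 {n : ℕ} (Φ : ℝ≥0∞ → ℝ≥0∞) (hY : IsYoung Φ)
    (φ : ℝ → ℝ) (hφ : Gdec n φ)
    (K : EuclideanSpace ℝ (Fin n) → EuclideanSpace ℝ (Fin n) → ℂ)
    (CK : ℝ) (hCK : 0 < CK)
    (hK : ∀ x y : EuclideanSpace ℝ (Fin n), x ≠ y → ‖K x y‖ ≤ CK / ‖x - y‖ ^ n) :
    ∃ C' : ℝ, 0 < C' ∧
      ∀ f : EuclideanSpace ℝ (Fin n) → ℝ,
      ∀ (z : EuclideanSpace ℝ (Fin n)) (r : ℝ), 0 < r →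
      ∀ x ∈ ball z r,
        ∫⁻ y in (ball z (2 * r))ᶜ, ENNReal.ofReal (‖K x y‖ * |f y|) ≤
          ENNReal.ofReal C' *
            (∫⁻ t in Set.Ioi (2 * r), ginv Φ (ENNReal.ofReal (φ t)) / ENNReal.ofReal t) *
            omNorm Φ φ f := by
  set C : ℝ≥0∞ :=
    2 * ENNReal.ofReal (2 ^ n * CK) * n * volume (ball (0 : EuclideanSpace ℝ (Fin n)) 1)
  have hC : C ≠ ⊤ := mul_ne_top (mul_ne_top (mul_ne_top ofNat_ne_top ofReal_ne_top)
    (natCast_ne_top n)) measure_ball_lt_top.ne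
  refine ⟨C.toReal + 1, by positivity, fun f z r hr x hx => ?_⟩
  set M := omNorm Φ φ f
  set tail := ∫⁻ t in Ioi (2 * r), ginv Φ (ENNReal.ofReal (φ t)) / ENNReal.ofReal t
  have hC' : C ≤ ENNReal.ofReal (C.toReal + 1) :=
    (ENNReal.le_ofReal_iff_toReal_le hC (by positivity)).2 (le_add_of_nonneg_right zero_le_one)
  -- the `t`-integrand need not be measurable, so `2 * M` can be pulled out of it only when finite
  rcases eq_or_ne M ⊤ with hM | hM
  · have htail := hY.lintegral_Ioi_ginv_div_pos hφ.1 hφ.2.1 (by linarith : 0 < 2 * r)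
    rw [hM, ENNReal.mul_top (mul_ne_zero (ENNReal.ofReal_pos.2 (by positivity)).ne' htail.ne')]
    exact le_top
  calc ∫⁻ y in (ball z (2 * r))ᶜ, ENNReal.ofReal (‖K x y‖ * |f y|)
      ≤ ∫⁻ y in (ball z (2 * r))ᶜ, ENNReal.ofReal (2 ^ n * CK) *
          (ENNReal.ofReal (dist y z ^ n)⁻¹ * ENNReal.ofReal |f y|) := by
        refine setLIntegral_mono' measurableSet_ball.compl fun y hy => ?_
        rw [← ENNReal.ofReal_mul (by positivity), ← ENNReal.ofReal_mul (by positivity),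
          ← mul_assoc, ← div_eq_mul_inv]
        gcongr
        exact norm_le_of_mem_ball_of_notMem_ball hCK.le hK hx hy
    _ ≤ ENNReal.ofReal (2 ^ n * CK) * (n * volume (ball (0 : EuclideanSpace ℝ (Fin n)) 1) *
          ∫⁻ t in Ioi (2 * r), 2 * ginv Φ (ENNReal.ofReal (φ t)) * M / ENNReal.ofReal t) := by
        rw [lintegral_const_mul' _ _ ofReal_ne_top]
        gcongr
        simpa only [finrank_euclideanSpace_fin] using lintegral_compl_ball_le volume
          (by linarith) fun t ht => hY.lintegral_ball_le_omNorm (by linarith)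
            (hφ.1 t (by linarith)) f z
    _ = C * tail * M := by
        simp_rw [mul_right_comm _ _ M, mul_div_assoc]
        rw [lintegral_const_mul' _ _ (mul_ne_top ofNat_ne_top hM)]
        ring
    _ ≤ ENNReal.ofReal (C.toReal + 1) * tail * M := by gcongr
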